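/- arXiv:1309.4141 — 4 statements merged into one kernel-verified Lean document; each statement's English description precedes it below -/
import Mathlib

section
/- Let R, ℓ, w ≥ 0 be real numbers and θ ∈ ℝ. In the Euclidean plane ℝ² with two-dimensional Lebesgue measure, let A = {(t,0) : t ∈ [0,R]} be the segment of length R along the x-axis, and let B be the image of the rectangle [−ℓ/2, ℓ/2] × [−w/2, w/2] under the rotation of ℝ² by angle θ. Then the Lebesgue measure of the Minkowski sum A ⊕ B = {a + b : a ∈ A, b ∈ B} equals R·ℓ·|sin θ| + R·w·|cos θ| + ℓ·w. -/
/-!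
By Cavalieri's principle the area of `A ⊕ B` is the integral over heights `v` of the lengths of
its horizontal slices. For a compact convex `B`, the slice of `A ⊕ B` at height `v` is the slice
of `B` (a closed interval) widened by `R`, as long as `B` meets that height. Hence
`|A ⊕ B| = |B| + R · |π₂ B|`, where `π₂ B` is the shadow of `B` on the vertical axis. The rotated
rectangle has area `ℓ w`, and its shadow is an interval of length `ℓ |sin θ| + w |cos θ|`.
-/

open MeasureTheory Real Set Pointwise

theorem Convex.preimage_prodMk_right {𝕜 E F : Type*} [Semiring 𝕜] [PartialOrder 𝕜]
    [AddCommMonoid E] [AddCommMonoid F] [Module 𝕜 E] [Module 𝕜 F] {s : Set (E × F)}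
    (hs : Convex 𝕜 s) (v : F) : Convex 𝕜 ((fun u => (u, v)) ⁻¹' s) := by
  intro x hx y hy a b ha hb hab
  convert hs hx hy ha hb hab using 1
  simp [← add_smul, hab]

theorem preimage_prodMk_right_image_prodMk_zero_add {α β : Type*} [Add α] [AddZeroClass β]
    (I : Set α) (S : Set (α × β)) (v : β) :
    (fun u => (u, v)) ⁻¹' ((fun t => (t, (0 : β))) '' I + S) = I + (fun u => (u, v)) ⁻¹' S := by
  ext u
  simp only [mem_preimage, mem_add, mem_image]
  constructor
  · rintro ⟨_, ⟨t, ht, rfl⟩, b, hb, hab⟩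
    obtain ⟨rfl, rfl⟩ := Prod.ext_iff.1 hab
    exact ⟨t, ht, b.1, by simpa using hb, rfl⟩
  · rintro ⟨t, ht, b, hb, rfl⟩
    exact ⟨(t, 0), ⟨t, ht, rfl⟩, (b, v), hb, by simp⟩

theorem preimage_prodMk_right_nonempty_iff {α β : Type*} {S : Set (α × β)} {v : β} :
    ((fun u => (u, v)) ⁻¹' S).Nonempty ↔ v ∈ Prod.snd '' S := by
  constructor
  · rintro ⟨u, hu⟩
    exact ⟨(u, v), hu, rfl⟩
  · rintro ⟨p, hp, rfl⟩
    exact ⟨p.1, hp⟩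

theorem volume_Icc_add_of_isCompact_of_convex {s : Set ℝ} (hs : IsCompact s) (hconv : Convex ℝ s)
    (hne : s.Nonempty) {a b : ℝ} (hab : a ≤ b) :
    volume (Icc a b + s) = volume s + ENNReal.ofReal (b - a) := by
  have hIcc := eq_Icc_of_connected_compact (hconv.isConnected hne) hs
  have hle : sInf s ≤ sSup s := csInf_le_csSup hne hs.bddBelow hs.bddAbove
  rw [hIcc, Icc_add_Icc hab hle, Real.volume_Icc, Real.volume_Icc,
    ← ENNReal.ofReal_add (by linarith) (by linarith)]
  congr 1
  ring

theorem IsCompact.preimage_prodMk_right {s : Set (ℝ × ℝ)} (hs : IsCompact s) (v : ℝ) :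
    IsCompact ((fun u => (u, v)) ⁻¹' s) :=
  Metric.isCompact_of_isClosed_isBounded
    (hs.isClosed.preimage (by fun_prop))
    ((hs.image continuous_fst).isBounded.subset fun u hu => ⟨(u, v), hu, rfl⟩)

theorem volume_image_prodMk_zero_Icc_add {B : Set (ℝ × ℝ)} (hBc : IsCompact B)
    (hBconv : Convex ℝ B) {R : ℝ} (hR : 0 ≤ R) :
    volume ((fun t : ℝ => ((t, 0) : ℝ × ℝ)) '' Icc 0 R + B) =
      volume B + ENNReal.ofReal R * volume (Prod.snd '' B) := by
  set A : Set (ℝ × ℝ) := (fun t : ℝ => ((t, 0) : ℝ × ℝ)) '' Icc 0 R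
  have hSc : IsCompact (A + B) := (isCompact_Icc.image (by fun_prop)).add hBc
  have hslice : ∀ v : ℝ, volume ((fun u => (u, v)) ⁻¹' (A + B)) =
      volume ((fun u => (u, v)) ⁻¹' B) +
        (Prod.snd '' B).indicator (fun _ => ENNReal.ofReal R) v := by
    intro v
    rw [preimage_prodMk_right_image_prodMk_zero_add]
    by_cases hv : v ∈ Prod.snd '' B
    · rw [indicator_of_mem hv, volume_Icc_add_of_isCompact_of_convex
        (hBc.preimage_prodMk_right v) (hBconv.preimage_prodMk_right v)
        (preimage_prodMk_right_nonempty_iff.2 hv) hR, sub_zero]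
    · rw [indicator_of_notMem hv, not_nonempty_iff_eq_empty.1
        (mt preimage_prodMk_right_nonempty_iff.1 hv)]
      simp
  rw [Measure.volume_eq_prod, Measure.prod_apply_symm hSc.measurableSet,
    lintegral_congr hslice,
    lintegral_add_left (measurable_measure_prodMk_right hBc.measurableSet),
    ← Measure.prod_apply_symm hBc.measurableSet,
    lintegral_indicator_const ((hBc.image continuous_snd).measurableSet), mul_comm]

theorem image_mul_right_Icc_neg_self {a : ℝ} (ha : 0 ≤ a) (s : ℝ) :
    (fun x => x * s) '' Icc (-a) a = Icc (-(a * |s|)) (a * |s|) := by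
  rcases le_or_gt 0 s with hs | hs
  · rw [image_mul_right_Icc (by linarith) hs, abs_of_nonneg hs, neg_mul]
  · have hneg : (fun x => x * s) = Neg.neg ∘ fun x => x * -s := by
      funext x
      simp
    rw [hneg, image_comp, image_mul_right_Icc (by linarith) (by linarith), image_neg_eq_neg,
      neg_Icc, abs_of_neg hs]
    congr 1
    ring

theorem image_Icc_prod_Icc_neg_self {a b : ℝ} (ha : 0 ≤ a) (hb : 0 ≤ b) (s c : ℝ) :
    (fun p : ℝ × ℝ => p.1 * s + p.2 * c) '' (Icc (-a) a ×ˢ Icc (-b) b) =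
      Icc (-(a * |s| + b * |c|)) (a * |s| + b * |c|) := by
  have hsum : (fun p : ℝ × ℝ => p.1 * s + p.2 * c) '' (Icc (-a) a ×ˢ Icc (-b) b) =
      (fun x => x * s) '' Icc (-a) a + (fun y => y * c) '' Icc (-b) b := by
    rw [← image2_add, image2_image_left, image2_image_right]
    exact image_prod fun x y => x * s + y * c
  rw [hsum, image_mul_right_Icc_neg_self ha, image_mul_right_Icc_neg_self hb,
    Icc_add_Icc (neg_le_self (by positivity)) (neg_le_self (by positivity)), neg_add]

noncomputable def planeRotation (θ : ℝ) : (ℝ × ℝ) →ₗ[ℝ] ℝ × ℝ where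
  toFun p := (p.1 * cos θ - p.2 * sin θ, p.1 * sin θ + p.2 * cos θ)
  map_add' p q := by
    simp only [Prod.fst_add, Prod.snd_add, Prod.mk_add_mk, Prod.mk.injEq]
    constructor <;> ring
  map_smul' r p := by
    simp only [Prod.smul_fst, Prod.smul_snd, smul_eq_mul, RingHom.id_apply, Prod.smul_mk,
      Prod.mk.injEq]
    constructor <;> ring

theorem det_planeRotation (θ : ℝ) : LinearMap.det (planeRotation θ) = 1 := by
  rw [← LinearMap.det_toMatrix (Module.Basis.finTwoProd ℝ), Matrix.det_fin_two]
  simp [LinearMap.toMatrix_apply, planeRotation, ← sq, cos_sq_add_sin_sq]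

theorem volume_image_planeRotation (θ : ℝ) (s : Set (ℝ × ℝ)) :
    volume (planeRotation θ '' s) = volume s := by
  rw [Measure.addHaar_image_linearMap, det_planeRotation, abs_one, ENNReal.ofReal_one, one_mul]

/-- The area of the Minkowski sum of a segment of length `R` along the x-axis with a
rectangle of length `ℓ`, width `w`, rotated by angle `θ`, equals
`R ℓ |sin θ| + R w |cos θ| + ℓ w`. -/
theorem minkowski_sum_segment_rectangle_area
    (R ℓ w θ : ℝ) (hR : 0 ≤ R) (hℓ : 0 ≤ ℓ) (hw : 0 ≤ w) :
    volume
      (((fun t : ℝ => ((t, 0) : ℝ × ℝ)) '' Set.Icc 0 R) +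
        ((fun p : ℝ × ℝ =>
            ((p.1 * Real.cos θ - p.2 * Real.sin θ,
              p.1 * Real.sin θ + p.2 * Real.cos θ) : ℝ × ℝ)) ''
          (Set.Icc (-(ℓ / 2)) (ℓ / 2) ×ˢ Set.Icc (-(w / 2)) (w / 2)))) =
      ENNReal.ofReal (R * ℓ * |Real.sin θ| + R * w * |Real.cos θ| + ℓ * w) := by
  set rect : Set (ℝ × ℝ) := Icc (-(ℓ / 2)) (ℓ / 2) ×ˢ Icc (-(w / 2)) (w / 2)
  have hrect : IsCompact rect := isCompact_Icc.prod isCompact_Icc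
  have hB : IsCompact (planeRotation θ '' rect) :=
    hrect.image (planeRotation θ).continuous_of_finiteDimensional
  have hBconv : Convex ℝ (planeRotation θ '' rect) :=
    ((convex_Icc _ _).prod (convex_Icc _ _)).linear_image _
  have harea : volume rect = ENNReal.ofReal (ℓ * w) := by
    rw [Measure.volume_eq_prod, Measure.prod_prod, Real.volume_Icc, Real.volume_Icc,
      ← ENNReal.ofReal_mul (by linarith)]
    congr 1
    ring
  have hshadow : Prod.snd '' (planeRotation θ '' rect) =
      Icc (-(ℓ / 2 * |sin θ| + w / 2 * |cos θ|)) (ℓ / 2 * |sin θ| + w / 2 * |cos θ|) := by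
    rw [image_image]
    exact image_Icc_prod_Icc_neg_self (by positivity) (by positivity) _ _
  change volume (_ + planeRotation θ '' rect) = _
  rw [volume_image_prodMk_zero_Icc_add hB hBconv hR, volume_image_planeRotation, harea, hshadow,
    Real.volume_Icc, sub_neg_eq_add, ← ENNReal.ofReal_mul hR, ← ENNReal.ofReal_add (by positivity) (by positivity)]
  congr 1
  ring
end

section
/- Let B be a nonempty compact convex subset of ℝ², let R ≥ 0, and let e, f be orthonormal vectors in ℝ². Let A = {t • e : t ∈ [0,R]} be the segment of length R in direction e. Then the two-dimensional Lebesgue measure of the Minkowski sum A ⊕ B equals the two-dimensional Lebesgue measure of B plus R times the one-dimensional Lebesgue measure of the set {⟪x, f⟫ : x ∈ B} ⊆ ℝ (the projection of B onto the direction orthogonal to e). -/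
/-!
In the orthonormal coordinates `x ↦ (⟪x, f⟫, ⟪x, e⟫)`, which preserve area, the segment
becomes `{0} × [0, R]`. By Fubini the area of the sum is the integral over the first
coordinate of the lengths of its vertical slices; a slice over a point of the projection of
`B` is the corresponding slice of `B`, a compact interval, lengthened by exactly `R`, and
every other slice is empty.
-/

open MeasureTheory Set Pointwise RealInnerProductSpace

lemma Real.volume_Icc_add {a b : ℝ} (hab : a ≤ b) {s : Set ℝ} (hs : IsCompact s)
    (hs_conv : Convex ℝ s) (hs_ne : s.Nonempty) :
    volume (Icc a b + s) = ENNReal.ofReal (b - a) + volume s := by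
  have hs_Icc : s = Icc (sInf s) (sSup s) :=
    eq_Icc_of_connected_compact ⟨hs_ne, hs_conv.isPreconnected⟩ hs
  have hle : sInf s ≤ sSup s := nonempty_Icc.1 (hs_Icc ▸ hs_ne)
  rw [hs_Icc, Icc_add_Icc hab hle, Real.volume_Icc, Real.volume_Icc,
    ← ENNReal.ofReal_add (sub_nonneg.2 hab) (sub_nonneg.2 hle)]
  ring_nf

lemma Set.mk_preimage_zero_prod_add {α β : Type*} [AddZeroClass α] [Add β] (x : α)
    (t : Set β) (K : Set (α × β)) :
    Prod.mk x ⁻¹' ({0} ×ˢ t + K) = t + Prod.mk x ⁻¹' K := by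
  ext y
  simp only [mem_preimage, mem_add, mem_prod, mem_singleton_iff, Prod.exists, Prod.mk_add_mk,
    Prod.mk.injEq]
  constructor
  · rintro ⟨_, b, ⟨rfl, hb⟩, _, d, hd, rfl, rfl⟩
    exact ⟨b, hb, d, by rwa [zero_add], rfl⟩
  · rintro ⟨b, hb, d, hd, rfl⟩
    exact ⟨0, b, ⟨rfl, hb⟩, x, d, hd, zero_add x, rfl⟩

lemma IsCompact.mk_preimage {α β : Type*} [TopologicalSpace α] [TopologicalSpace β]
    [T2Space α] [T2Space β] {K : Set (α × β)} (hK : IsCompact K) (x : α) :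
    IsCompact (Prod.mk x ⁻¹' K) :=
  (hK.image continuous_snd).of_isClosed_subset
    (hK.isClosed.preimage (Continuous.prodMk_right x)) fun y hy => ⟨(x, y), hy, rfl⟩

lemma Convex.mk_preimage {𝕜 E F : Type*} [Semiring 𝕜] [PartialOrder 𝕜] [AddCommMonoid E]
    [AddCommMonoid F] [Module 𝕜 E] [Module 𝕜 F] {K : Set (E × F)} (hK : Convex 𝕜 K) (x : E) :
    Convex 𝕜 (Prod.mk x ⁻¹' K) := by
  intro y hy z hz a b ha hb hab
  simpa [Prod.smul_mk, ← add_smul, hab] using hK hy hz ha hb hab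

lemma volume_mk_preimage_zero_prod_Icc_add {K : Set (ℝ × ℝ)} (hK : IsCompact K)
    (hK_conv : Convex ℝ K) {R : ℝ} (hR : 0 ≤ R) (x : ℝ) :
    volume (Prod.mk x ⁻¹' ({0} ×ˢ Icc 0 R + K)) =
      (Prod.fst '' K).indicator (fun _ => ENNReal.ofReal R) x + volume (Prod.mk x ⁻¹' K) := by
  rw [mk_preimage_zero_prod_add]
  by_cases hx : x ∈ Prod.fst '' K
  · have hne : (Prod.mk x ⁻¹' K).Nonempty := by
      obtain ⟨⟨_, y⟩, hy, rfl⟩ := hx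
      exact ⟨y, hy⟩
    rw [Real.volume_Icc_add hR (hK.mk_preimage x) (hK_conv.mk_preimage x) hne, sub_zero,
      indicator_of_mem hx]
  · have hempty : Prod.mk x ⁻¹' K = ∅ :=
      eq_empty_of_forall_notMem fun y hy => hx ⟨(x, y), hy, rfl⟩
    rw [hempty, add_empty, indicator_of_notMem hx, measure_empty, zero_add]

lemma volume_zero_prod_Icc_add {K : Set (ℝ × ℝ)} (hK : IsCompact K) (hK_conv : Convex ℝ K)
    {R : ℝ} (hR : 0 ≤ R) :
    volume ({0} ×ˢ Icc 0 R + K) = volume K + ENNReal.ofReal R * volume (Prod.fst '' K) := by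
  have hproj : MeasurableSet (Prod.fst '' K) := (hK.image continuous_fst).measurableSet
  have hsum : MeasurableSet ({(0 : ℝ)} ×ˢ Icc 0 R + K) :=
    ((isCompact_singleton.prod isCompact_Icc).add hK).measurableSet
  rw [Measure.volume_eq_prod, Measure.prod_apply hsum, Measure.prod_apply hK.measurableSet]
  simp_rw [volume_mk_preimage_zero_prod_Icc_add hK hK_conv hR]
  rw [lintegral_add_left (measurable_const.indicator hproj), lintegral_indicator_const hproj,
    add_comm]

section Coordinates

variable {E : Type*} [NormedAddCommGroup E] [InnerProductSpace ℝ E]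

noncomputable def OrthonormalBasis.equivProd (b : OrthonormalBasis (Fin 2) ℝ E) :
    E ≃L[ℝ] ℝ × ℝ :=
  b.repr.toContinuousLinearEquiv.trans
    ((PiLp.continuousLinearEquiv 2 ℝ _).trans (ContinuousLinearEquiv.finTwoArrow ℝ ℝ))

lemma OrthonormalBasis.equivProd_apply (b : OrthonormalBasis (Fin 2) ℝ E) (x : E) :
    b.equivProd x = (⟪b 0, x⟫, ⟪b 1, x⟫) := by
  simp [OrthonormalBasis.equivProd, b.repr_apply_apply]

variable [FiniteDimensional ℝ E] [MeasurableSpace E] [BorelSpace E]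

lemma OrthonormalBasis.measurePreserving_equivProd (b : OrthonormalBasis (Fin 2) ℝ E) :
    MeasurePreserving b.equivProd :=
  (volume_preserving_finTwoArrow ℝ).comp
    ((PiLp.volume_preserving_ofLp _).comp b.measurePreserving_repr)

lemma OrthonormalBasis.volume_image_equivProd (b : OrthonormalBasis (Fin 2) ℝ E) (s : Set E) :
    volume (b.equivProd '' s) = volume s := by
  rw [← b.measurePreserving_equivProd.measure_preimage_emb
      b.equivProd.toHomeomorph.measurableEmbedding, b.equivProd.injective.preimage_image]

end Coordinates

theorem minkowski_sum_segment_convex_area_general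
    (B : Set (EuclideanSpace ℝ (Fin 2))) (hBc : IsCompact B)
    (hBconv : Convex ℝ B) (R : ℝ) (hR : 0 ≤ R)
    (e f : EuclideanSpace ℝ (Fin 2)) (he : ‖e‖ = 1) (hf : ‖f‖ = 1)
    (hef : ⟪e, f⟫ = 0) :
    volume (((fun t : ℝ => t • e) '' Set.Icc 0 R) + B) =
      volume B + ENNReal.ofReal R * volume ((fun x => ⟪x, f⟫) '' B) := by
  have hfe : Orthonormal ℝ ![f, e] := by
    simp [orthonormal_vecCons_iff, orthonormal_subsingleton_iff, hf, he, real_inner_comm e f,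
      hef]
  let b := (basisOfOrthonormalOfCardEqFinrank hfe (by simp)).toOrthonormalBasis
    (by rwa [coe_basisOfOrthonormalOfCardEqFinrank])
  have hcoords : ∀ x, b.equivProd x = (⟪x, f⟫, ⟪x, e⟫) := fun x => by
    simp [b, b.equivProd_apply, real_inner_comm]
  have hsegment : b.equivProd '' ((fun t : ℝ => t • e) '' Icc 0 R) = {0} ×ˢ Icc 0 R := by
    rw [image_image, singleton_prod]
    refine image_congr fun t _ => ?_
    simp [hcoords, real_inner_smul_left, he, hef]
  have hproj : Prod.fst '' (b.equivProd '' B) = (fun x => ⟪x, f⟫) '' B := by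
    simp only [image_image, hcoords]
  rw [← b.volume_image_equivProd, image_add, hsegment,
    volume_zero_prod_Icc_add (hBc.image b.equivProd.continuous)
      (hBconv.linear_image b.equivProd.toLinearMap) hR,
    b.volume_image_equivProd, hproj]

/-- For a nonempty compact convex set `B ⊆ ℝ²` and a segment `A` of length `R` in the
direction of a unit vector `e`, the area of the Minkowski sum `A ⊕ B` equals the area of
`B` plus `R` times the length of the projection of `B` onto the orthogonal direction `f`. -/
theorem minkowski_sum_segment_convex_area
    (B : Set (EuclideanSpace ℝ (Fin 2))) (hBne : B.Nonempty) (hBc : IsCompact B)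
    (hBconv : Convex ℝ B) (R : ℝ) (hR : 0 ≤ R)
    (e f : EuclideanSpace ℝ (Fin 2)) (he : ‖e‖ = 1) (hf : ‖f‖ = 1)
    (hef : ⟪e, f⟫ = 0) :
    volume (((fun t : ℝ => t • e) '' Set.Icc 0 R) + B) =
      volume B + ENNReal.ofReal R * volume ((fun x => ⟪x, f⟫) '' B) :=
  minkowski_sum_segment_convex_area_general B hBc hBconv R hR e f he hf hef
end

section
/- Let c ≥ 0, κ > 0 and t ≥ 0 be real numbers. Then e^{−c} + ∫₀^{∞} e^{−t x} · ( Σ_{m=0}^{∞} e^{−(c + κ x)} · c^{m+1} · κ^{m+1} · x^m / (m! · (m+1)!) ) dx = exp( c · ( κ/(κ + t) − 1 ) ). -/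
/-!
After multiplying by `e^{-tx}`, the density is a power series in `x` times `e^{-(κ+t)x}`.
Integrating termwise with `∫₀^∞ x^m e^{-bx} dx = m!/b^{m+1}` turns its `m`-th term into
`e^{-c} a^{m+1}/(m+1)!` with `a = cκ/(κ+t)`, so the atom `e^{-c}` is exactly the missing `n = 0`
term and the total is `e^{-c} Σₙ aⁿ/n! = e^{a-c}`.
-/

open MeasureTheory Real Set Nat

lemma integrableOn_exp_neg_mul_mul_pow {b : ℝ} (hb : 0 < b) (m : ℕ) :
    IntegrableOn (fun x : ℝ => exp (-(b * x)) * x ^ m) (Ioi 0) := by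
  refine (integrableOn_rpow_mul_exp_neg_mul_rpow (s := m)
    (neg_one_lt_zero.trans_le m.cast_nonneg) one_pos hb).congr_fun (fun x _ => ?_) measurableSet_Ioi
  dsimp only
  rw [rpow_natCast, rpow_one, neg_mul, mul_comm]

lemma integral_exp_neg_mul_mul_pow {b : ℝ} (hb : 0 < b) (m : ℕ) :
    ∫ x in Ioi 0, exp (-(b * x)) * x ^ m = m ! / b ^ (m + 1) := by
  calc ∫ x in Ioi 0, exp (-(b * x)) * x ^ m
      = ∫ x in Ioi 0, x ^ ((m + 1 : ℕ) - 1 : ℝ) * exp (-(b * x)) := by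
        refine setIntegral_congr_fun measurableSet_Ioi fun x _ => ?_
        rw [Nat.cast_succ, add_sub_cancel_right, rpow_natCast, mul_comm]
    _ = (1 / b) ^ ((m + 1 : ℕ) : ℝ) * Gamma (m + 1 : ℕ) :=
        integral_rpow_mul_exp_neg_mul_Ioi (by positivity) hb
    _ = m ! / b ^ (m + 1) := by
        rw [rpow_natCast, Nat.cast_succ, Gamma_nat_eq_factorial, one_div, inv_pow, inv_mul_eq_div]

lemma integral_tsum_mul_exp_neg_mul_mul_pow {b : ℝ} (hb : 0 < b) {C : ℕ → ℝ}
    (hC : Summable fun m => |C m| * (m ! / b ^ (m + 1))) :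
    ∫ x in Ioi 0, ∑' m, C m * (exp (-(b * x)) * x ^ m) = ∑' m, C m * (m ! / b ^ (m + 1)) := by
  have hnorm : ∀ m, ∫ x in Ioi 0, ‖C m * (exp (-(b * x)) * x ^ m)‖
      = |C m| * (m ! / b ^ (m + 1)) := by
    intro m
    rw [← integral_exp_neg_mul_mul_pow hb m, ← integral_const_mul]
    refine setIntegral_congr_fun measurableSet_Ioi fun x (hx : 0 < x) => ?_
    rw [norm_mul, norm_eq_abs, norm_of_nonneg (by positivity)]
  rw [← integral_tsum_of_summable_integral_norm
    (fun m => (integrableOn_exp_neg_mul_mul_pow hb m).const_mul (C m))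
    (by simpa only [hnorm] using hC)]
  exact tsum_congr fun m => by rw [integral_const_mul, integral_exp_neg_mul_mul_pow hb m]

lemma hasSum_pow_succ_div_factorial_succ (a : ℝ) :
    HasSum (fun m : ℕ => a ^ (m + 1) / (m + 1)!) (exp a - 1) := by
  have hexp : HasSum (fun n : ℕ => a ^ n / n !) (exp a) := by
    rw [exp_eq_exp_ℝ]
    exact NormedSpace.expSeries_div_hasSum_exp a
  simpa using (hasSum_nat_add_iff' 1).mpr hexp

theorem laplace_transform_uniform_loss_general (c κ t : ℝ) (hκ : 0 < κ) (ht : 0 ≤ t) :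
    Real.exp (-c) +
        ∫ x in Set.Ioi (0 : ℝ),
          Real.exp (-t * x) *
            ∑' m : ℕ,
              Real.exp (-(c + κ * x)) * c ^ (m + 1) * κ ^ (m + 1) * x ^ m /
                (m.factorial * (m + 1).factorial) =
      Real.exp (c * (κ / (κ + t) - 1)) := by
  have hb : 0 < κ + t := by positivity
  set a := c * κ / (κ + t)
  set C : ℕ → ℝ := fun m => exp (-c) * (c * κ) ^ (m + 1) / (m ! * (m + 1)!)
  have hintegrand : ∀ x : ℝ, exp (-t * x) * ∑' m : ℕ,
      exp (-(c + κ * x)) * c ^ (m + 1) * κ ^ (m + 1) * x ^ m / (m ! * (m + 1)!)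
        = ∑' m, C m * (exp (-((κ + t) * x)) * x ^ m) := by
    intro x
    have hsplit : exp (-t * x) * exp (-(c + κ * x)) = exp (-c) * exp (-((κ + t) * x)) := by
      rw [← exp_add, ← exp_add]
      ring_nf
    rw [← tsum_mul_left]
    refine tsum_congr fun m => ?_
    linear_combination (c * κ) ^ (m + 1) * x ^ m / (m ! * (m + 1)!) * hsplit
  have hmoment : ∀ m, C m * (m ! / (κ + t) ^ (m + 1)) = exp (-c) * (a ^ (m + 1) / (m + 1)!) := by
    intro m
    simp only [C, a]
    rw [div_pow]
    field_simp
  have hseries := (hasSum_pow_succ_div_factorial_succ a).mul_left (exp (-c))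
  have habs : Summable fun m => |C m| * (m ! / (κ + t) ^ (m + 1)) := by
    refine (summable_abs_iff.mpr hseries.summable).congr fun m => ?_
    rw [← hmoment, abs_mul, abs_of_nonneg (by positivity : (0 : ℝ) ≤ m ! / (κ + t) ^ (m + 1))]
  simp_rw [hintegrand]
  rw [integral_tsum_mul_exp_neg_mul_mul_pow hb habs, tsum_congr hmoment, hseries.tsum_eq,
    _root_.mul_sub_one, add_sub_cancel, ← exp_add]
  congr 1
  simp only [a]
  field_simp
  ring

/-- The Laplace transform of the mixed distribution consisting of an atom of mass `e^{-c}`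
at `0` together with the density
`x ↦ Σ_m e^{-(c + κ x)} c^{m+1} κ^{m+1} x^m / (m! (m+1)!)` on `(0,∞)`
equals `exp (c (κ/(κ+t) - 1))`. -/
theorem laplace_transform_uniform_loss (c κ t : ℝ) (hc : 0 ≤ c) (hκ : 0 < κ) (ht : 0 ≤ t) :
    Real.exp (-c) +
        ∫ x in Set.Ioi (0 : ℝ),
          Real.exp (-t * x) *
            ∑' m : ℕ,
              Real.exp (-(c + κ * x)) * c ^ (m + 1) * κ ^ (m + 1) * x ^ m /
                (m.factorial * (m + 1).factorial) =
      Real.exp (c * (κ / (κ + t) - 1)) :=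
  laplace_transform_uniform_loss_general c κ t hκ ht
end

section
/- Let β > 0, p ≥ 0, μ ≥ 0 and x > 0 be real numbers, and define U(x) = (e^{−p}/β²) · (1 − (βx + 1)e^{−βx}). Then Σ_{i=0}^{∞} ( ∫₀^{x} (1 − e^{−(βt + p)}) · (2t/x²) dt )^i · e^{−μπx²} (μπx²)^i / i! = exp(−2πμ · U(x)). -/
/-!
A base station placed uniformly in the disc of radius `x` lies at distance `t` with density
`2t/x²`, so the integral is the probability `q = 1 - 2U(x)/x²` that it is blocked. The sum is
then the generating function `E[q^N] = e^{-(1-q)λ}` of the Poisson number `N` of base stations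
in the disc, with `λ = μπx²`, and `(1-q)λ = 2πμU(x)`.
-/

open Real

open Nat in
theorem hasSum_pow_mul_poisson_weight (q r : ℝ) :
    HasSum (fun i : ℕ => q ^ i * (exp (-r) * r ^ i / i !)) (exp (-((1 - q) * r))) := by
  have h := (NormedSpace.expSeries_div_hasSum_exp (q * r)).mul_left (exp (-r))
  rw [← exp_eq_exp_ℝ, ← exp_add, show -r + q * r = -((1 - q) * r) by ring] at h
  exact h.congr_fun fun i => by ring

theorem integral_mul_exp_neg_mul {β : ℝ} (hβ : β ≠ 0) (x : ℝ) :
    ∫ t in (0 : ℝ)..x, t * exp (-(β * t)) = (1 - (β * x + 1) * exp (-(β * x))) / β ^ 2 := by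
  have hderiv (t : ℝ) : HasDerivAt (fun t => -((β * t + 1) * exp (-(β * t))) / β ^ 2)
      (t * exp (-(β * t))) t := by
    refine ((((((hasDerivAt_id' t).const_mul β).add_const 1).fun_mul
      ((hasDerivAt_id' t).const_mul β).fun_neg.exp).fun_neg).div_const (β ^ 2)).congr_deriv ?_
    field_simp
    ring
  rw [intervalIntegral.integral_eq_sub_of_hasDerivAt (fun t _ => hderiv t)
    ((by fun_prop : Continuous fun t => t * exp (-(β * t))).intervalIntegrable _ _)]
  simp only [mul_zero, neg_zero, exp_zero]
  ring

theorem integral_blockage_prob_mul_radial_density {β : ℝ} (hβ : β ≠ 0) (p : ℝ) {x : ℝ}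
    (hx : x ≠ 0) :
    ∫ t in (0 : ℝ)..x, (1 - exp (-(β * t + p))) * (2 * t / x ^ 2) =
      1 - 2 / x ^ 2 * (exp (-p) / β ^ 2 * (1 - (β * x + 1) * exp (-(β * x)))) := by
  have hsplit : (fun t => (1 - exp (-(β * t + p))) * (2 * t / x ^ 2)) =
      fun t => 2 / x ^ 2 * t - 2 * exp (-p) / x ^ 2 * (t * exp (-(β * t))) := by
    ext t
    rw [neg_add, exp_add]
    ring
  rw [hsplit, intervalIntegral.integral_sub ((by fun_prop : Continuous _).intervalIntegrable _ _)
    ((by fun_prop : Continuous _).intervalIntegrable _ _),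
    intervalIntegral.integral_const_mul, intervalIntegral.integral_const_mul, integral_id,
    integral_mul_exp_neg_mul hβ]
  field_simp
  ring

theorem nearest_visible_bs_distance_general (β p μ x : ℝ) (hβ : 0 < β)
    (hx : 0 < x) :
    ∑' i : ℕ,
        (∫ t in (0 : ℝ)..x, (1 - Real.exp (-(β * t + p))) * (2 * t / x ^ 2)) ^ i *
          (Real.exp (-(μ * π * x ^ 2)) * (μ * π * x ^ 2) ^ i / i.factorial) =
      Real.exp (-(2 * π * μ *
        (Real.exp (-p) / β ^ 2 * (1 - (β * x + 1) * Real.exp (-(β * x)))))) := by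
  rw [integral_blockage_prob_mul_radial_density hβ.ne' p hx.ne',
    (hasSum_pow_mul_poisson_weight _ _).tsum_eq]
  congr 1
  field_simp
  ring

/-- The nearest-visible-base-station distance computation: with
`U x = (e^{-p}/β²)(1 - (βx+1)e^{-βx})`,
`Σ_i (∫₀^x (1 - e^{-(βt+p)})(2t/x²) dt)^i e^{-μπx²}(μπx²)^i / i! = exp (-2πμ U x)`. -/
theorem nearest_visible_bs_distance (β p μ x : ℝ) (hβ : 0 < β) (hp : 0 ≤ p)
    (hμ : 0 ≤ μ) (hx : 0 < x) :
    ∑' i : ℕ,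
        (∫ t in (0 : ℝ)..x, (1 - Real.exp (-(β * t + p))) * (2 * t / x ^ 2)) ^ i *
          (Real.exp (-(μ * π * x ^ 2)) * (μ * π * x ^ 2) ^ i / i.factorial) =
      Real.exp (-(2 * π * μ *
        (Real.exp (-p) / β ^ 2 * (1 - (β * x + 1) * Real.exp (-(β * x)))))) :=
  nearest_visible_bs_distance_general β p μ x hβ hx
end
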